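/- arXiv:1401.1730 — 5 statements merged into one kernel-verified Lean document; each statement's English description precedes it below -/
import Mathlib

section
/- The maximal element (in lexicographic order) of the set E_{k+1,0}(pk) of strictly increasing (k+1)-tuples of non-negative integers starting with 0 and summing to pk is: (0, p−l, p−l+1, ..., p−1, p+1, ..., p+l−1, p+l) if k = 2l, and (0, p−l, p−l+1, ..., p−1, p, p+1, ..., p+l−1, p+l) if k = 2l+1 (assuming such tuples exist, i.e. k ≤ 2p). -/
/-- The claimed maximal tuple `δ(k)` of `E_{k+1,0}(pk)`:
`(0, p−l, p−l+1, …, p−1, p+1, …, p+l)` if `k = 2l`, and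
`(0, p−l, …, p−1, p, p+1, …, p+l)` if `k = 2l+1`, where `l = ⌊k/2⌋`. -/
def deltaTuple (p k : ℕ) : Fin (k + 1) → ℕ := fun i =>
  if (i : ℕ) = 0 then 0
  else if k % 2 = 0 ∧ k / 2 + 1 ≤ (i : ℕ) then p - k / 2 + (i : ℕ)
  else p - k / 2 + (i : ℕ) - 1

private lemma cnt_aux (c : ℕ) : ∀ n : ℕ,
    (∑ i ∈ Finset.range n, if c ≤ i then 1 else 0) = n - c := by
  intro n
  induction n with
  | zero => simp
  | succ n ih => rw [Finset.sum_range_succ, ih]; split_ifs <;> omega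

private lemma gap_aux {n : ℕ} {f : Fin (n + 1) → ℕ} (hf : StrictMono f) :
    ∀ (d : ℕ) (a b : Fin (n + 1)), (a : ℕ) + d = (b : ℕ) → f a + d ≤ f b := by
  intro d
  induction d with
  | zero =>
      intro a b h
      have : a = b := Fin.ext (by omega)
      subst this; simp
  | succ d ih =>
      intro a b h
      have hb : (b : ℕ) < n + 1 := b.isLt
      have hc : (a : ℕ) + d < n + 1 := by omega
      have h1 := ih a ⟨(a : ℕ) + d, hc⟩ rfl
      have h2 : f ⟨(a : ℕ) + d, hc⟩ < f b := hf (by rw [Fin.lt_def]; simp; omega)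
      omega

private lemma delta_mono (p k : ℕ) (hq : k / 2 < p) : StrictMono (deltaTuple p k) := by
  intro a b hab
  have h1 : (a : ℕ) < (b : ℕ) := hab
  have h2 : (b : ℕ) < k + 1 := b.isLt
  simp only [deltaTuple]
  split_ifs <;> omega

private lemma delta_gap (p k : ℕ) (hq : k / 2 < p) (a b : Fin (k + 1))
    (ha : 1 ≤ (a : ℕ)) (hab : (a : ℕ) ≤ (b : ℕ)) :
    deltaTuple p k b ≤ deltaTuple p k a + ((b : ℕ) - (a : ℕ)) + 1 := by
  simp only [deltaTuple]
  split_ifs <;> omega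

private lemma delta_sum (p k : ℕ) (hk1 : 1 ≤ k) (hq : k / 2 < p) :
    (∑ i : Fin (k + 1), deltaTuple p k i) = p * k := by
  have hconv : (∑ i : Fin (k + 1), deltaTuple p k i)
      = ∑ i ∈ Finset.range (k + 1),
          (if i = 0 then 0 else if k % 2 = 0 ∧ k / 2 + 1 ≤ i then p - k / 2 + i
            else p - k / 2 + i - 1) := by
    rw [← Fin.sum_univ_eq_sum_range (fun i =>
      if i = 0 then 0 else if k % 2 = 0 ∧ k / 2 + 1 ≤ i then p - k / 2 + i
        else p - k / 2 + i - 1) (k + 1)]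
    rfl
  rw [hconv]
  obtain ⟨r, hr⟩ : ∃ r, p = k / 2 + 1 + r := ⟨p - k / 2 - 1, by omega⟩
  rcases Nat.even_or_odd k with ⟨l, hl⟩ | ⟨l, hl⟩
  · subst hl
    have key : ∀ i ∈ Finset.range (l + l + 1),
        (if i = 0 then 0 else if (l + l) % 2 = 0 ∧ (l + l) / 2 + 1 ≤ i
          then p - (l + l) / 2 + i else p - (l + l) / 2 + i - 1)
        = ((if i = 0 then 0 else r) + i + (if l + 1 ≤ i then 1 else 0)) := by
      intro i _
      split_ifs <;> omega
    rw [Finset.sum_congr rfl key, Finset.sum_add_distrib, Finset.sum_add_distrib, cnt_aux]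
    have hS1 : (∑ i ∈ Finset.range (l + l + 1), if i = 0 then 0 else r) = (l + l) * r := by
      rw [Finset.sum_range_succ']
      simp [mul_comm]
    have hS2 : (∑ i ∈ Finset.range (l + l + 1), i) * 2 = 4 * (l * l) + 2 * l := by
      rw [Finset.sum_range_id_mul_two]
      rw [show l + l + 1 - 1 = l + l from rfl]
      ring
    obtain ⟨m, hm⟩ : ∃ m, l * l = m := ⟨_, rfl⟩
    rw [hm] at hS2
    have hS2' : (∑ i ∈ Finset.range (l + l + 1), i) = 2 * m + l := by omega
    rw [hS1, hS2', show l + l + 1 - (l + 1) = l from by omega, ← hm, hr,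
      show (l + l) / 2 = l from by omega]
    ring
  · subst hl
    have key : ∀ i ∈ Finset.range (2 * l + 1 + 1),
        (if i = 0 then 0 else if (2 * l + 1) % 2 = 0 ∧ (2 * l + 1) / 2 + 1 ≤ i
          then p - (2 * l + 1) / 2 + i else p - (2 * l + 1) / 2 + i - 1)
        = ((if i = 0 then 0 else r) + i) := by
      intro i _
      split_ifs <;> omega
    rw [Finset.sum_congr rfl key, Finset.sum_add_distrib]
    have hS1 : (∑ i ∈ Finset.range (2 * l + 1 + 1), if i = 0 then 0 else r)
        = (2 * l + 1) * r := by
      rw [Finset.sum_range_succ']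
      simp [mul_comm]
    have hS2 : (∑ i ∈ Finset.range (2 * l + 1 + 1), i) * 2 = 4 * (l * l) + 6 * l + 2 := by
      rw [Finset.sum_range_id_mul_two]
      rw [show 2 * l + 1 + 1 - 1 = 2 * l + 1 from rfl]
      ring
    obtain ⟨m, hm⟩ : ∃ m, l * l = m := ⟨_, rfl⟩
    rw [hm] at hS2
    have hS2' : (∑ i ∈ Finset.range (2 * l + 1 + 1), i) = 2 * m + 3 * l + 1 := by omega
    rw [hS1, hS2', ← hm, hr, show (2 * l + 1) / 2 = l from by omega]
    ring

/-- For `1 ≤ k ≤ 2p − 1` (so that `E_{k+1,0}(pk)` is non-empty), `δ(k)` belongs to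
`E_{k+1,0}(pk)` (strictly increasing, starting with `0`, of sum `pk`) and is its maximal
element in lexicographic order. -/
theorem stmt_7 (p k : ℕ) (hk1 : 1 ≤ k) (hk : k ≤ 2 * p - 1) :
    StrictMono (deltaTuple p k) ∧ deltaTuple p k 0 = 0 ∧
      (∑ i, deltaTuple p k i) = p * k ∧
      ∀ β : Fin (k + 1) → ℕ, StrictMono β → β 0 = 0 → (∑ i, β i) = p * k →
        β = deltaTuple p k ∨
          ∃ j : Fin (k + 1), (∀ i, i < j → β i = deltaTuple p k i) ∧
            β j < deltaTuple p k j := by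
  have hq : k / 2 < p := by omega
  have hmono := delta_mono p k hq
  have h0 : deltaTuple p k 0 = 0 := by simp [deltaTuple]
  have hsum : (∑ i, deltaTuple p k i) = p * k := delta_sum p k hk1 hq
  refine ⟨hmono, h0, hsum, ?_⟩
  intro β hβm hβ0 hβs
  by_cases hbd : β = deltaTuple p k
  · exact Or.inl hbd
  right
  obtain ⟨i0, hi0⟩ := Function.ne_iff.mp hbd
  set s : Finset (Fin (k + 1)) := Finset.univ.filter (fun i => β i ≠ deltaTuple p k i)
    with hs
  have hsne : s.Nonempty := ⟨i0, by simp [hs, hi0]⟩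
  obtain ⟨j, hjs, hjmin⟩ := Finset.exists_min_image s id hsne
  have hjne : β j ≠ deltaTuple p k j := by simpa [hs] using hjs
  have heq : ∀ i, i < j → β i = deltaTuple p k i := by
    intro i hij
    by_contra hcon
    exact absurd hij (not_lt.mpr (hjmin i (by simp [hs, hcon])))
  refine ⟨j, heq, ?_⟩
  by_contra hnlt
  have hgt : deltaTuple p k j < β j := lt_of_le_of_ne (not_lt.mp hnlt) hjne.symm
  have hj1 : 1 ≤ (j : ℕ) := by
    by_contra h
    have hj0 : j = 0 := by rw [Fin.ext_iff, Fin.val_zero]; omega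
    rw [hj0, hβ0, h0] at hjne
    exact hjne rfl
  have hlt : (∑ i, deltaTuple p k i) < ∑ i, β i := by
    apply Finset.sum_lt_sum
    · intro i _
      rcases lt_trichotomy i j with h | h | h
      · exact (heq i h).ge
      · subst h; exact hgt.le
      · have hij : (j : ℕ) < (i : ℕ) := h
        have hg := gap_aux hβm ((i : ℕ) - (j : ℕ)) j i (by omega)
        have hd := delta_gap p k hq j i hj1 (le_of_lt hij)
        omega
    · exact ⟨j, Finset.mem_univ j, hgt⟩
  rw [hsum, hβs] at hlt
  exact lt_irrefl _ hlt
end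

section
/- Over a field of characteristic 0, the one-variable Weyl algebra A_1 (differential operators on K[x] generated by multiplication operators and ∂ = d/dx) satisfies no nontrivial multilinear polynomial identity: for every N ≥ 1 there exist X_1, ..., X_N ∈ A_1 with s_N(X_1, ..., X_N) ≠ 0. -/
/-- The standard (skew-symmetric) polynomial `s_N`. -/
noncomputable def sPoly {A : Type*} [Ring A] {N : ℕ} (X : Fin N → A) : A :=
  ∑ σ : Equiv.Perm (Fin N), (Equiv.Perm.sign σ : ℤ) • (List.ofFn fun i => X (σ i)).prod

/-- The one-variable Weyl algebra, realized as the subalgebra of `End_K(K[x])` generated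
by multiplication by `x` and by `∂ = d/dx`. -/
noncomputable def WeylAlg (K : Type) [Field K] : Subalgebra K (Module.End K (Polynomial K)) :=
  Algebra.adjoin K
    {(LinearMap.mulLeft K (Polynomial.X : Polynomial K) : Module.End K (Polynomial K)),
     ((Polynomial.derivative : Polynomial K →ₗ[K] Polynomial K) : Module.End K (Polynomial K))}

namespace WeylAux

open Polynomial

variable (K : Type) [Field K] [CharZero K]

noncomputable def Mx : Module.End K (Polynomial K) := LinearMap.mulLeft K Polynomial.X

noncomputable def Dd : Module.End K (Polynomial K) :=
  (Polynomial.derivative : Polynomial K →ₗ[K] Polynomial K)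

noncomputable def Op : Module.End K (Polynomial K) := Mx K * Dd K

lemma Op_pow (j : ℕ) : Op K (X ^ j : K[X]) = (j : K) • (X ^ j : K[X]) := by
  cases j with
  | zero => simp [Op, Mx, Dd, Module.End.mul_apply]
  | succ n =>
      simp only [Op, Mx, Dd, Module.End.mul_apply]
      show (LinearMap.mulLeft K Polynomial.X) (derivative (X ^ (n+1) : K[X])) = _
      rw [derivative_X_pow, LinearMap.mulLeft_apply, smul_eq_C_mul]
      push_cast
      ring

lemma pow_eig {V : Type*} [AddCommGroup V] [Module K V] (f : Module.End K V) (μ : K) (v : V)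
    (h : f v = μ • v) (n : ℕ) : (f ^ n) v = μ ^ n • v := by
  induction n with
  | zero => simp
  | succ n ih =>
      rw [pow_succ, Module.End.mul_apply, h, map_smul, ih, smul_smul, pow_succ, mul_comm]

lemma aeval_eig {V : Type*} [AddCommGroup V] [Module K V] (f : Module.End K V) (μ : K) (v : V)
    (h : f v = μ • v) (p : K[X]) : (Polynomial.aeval f p) v = p.eval μ • v := by
  induction p using Polynomial.induction_on' with
  | add p q hp hq => rw [map_add, LinearMap.add_apply, hp, hq, eval_add, add_smul]
  | monomial n a =>
      rw [aeval_monomial, Module.End.mul_apply, pow_eig K f μ v h n, map_smul,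
        Module.algebraMap_end_apply, eval_monomial, smul_smul, mul_comm]

variable {N : ℕ}

noncomputable def Lb (i : Fin N) : K[X] :=
  Lagrange.basis Finset.univ (fun i : Fin N => ((i : ℕ) : K)) i

lemma nodes_inj : Set.InjOn (fun i : Fin N => ((i : ℕ) : K)) ↑(Finset.univ : Finset (Fin N)) :=
  fun i _ j _ h => Fin.val_injective (Nat.cast_injective h)

noncomputable def Xi (i : Fin N) : Module.End K (Polynomial K) :=
  Mx K * Polynomial.aeval (Op K) (Lb K i)

lemma aeval_mem {A : Type*} [Ring A] [Algebra K A] (S : Subalgebra K A) {a : A} (ha : a ∈ S)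
    (p : K[X]) : Polynomial.aeval a p ∈ S := by
  have : Polynomial.aeval a p = S.val (Polynomial.aeval (⟨a, ha⟩ : S) p) := by
    rw [← Polynomial.aeval_algHom_apply]
    rfl
  rw [this]
  exact (Polynomial.aeval (⟨a, ha⟩ : S) p).2

lemma Xi_mem (i : Fin N) : Xi K i ∈ WeylAlg K := by
  have hM : Mx K ∈ WeylAlg K :=
    Algebra.subset_adjoin (by left; rfl)
  have hD : Dd K ∈ WeylAlg K :=
    Algebra.subset_adjoin (by right; rfl)
  exact mul_mem hM (aeval_mem K _ (mul_mem hM hD) _)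

lemma Xi_pow (a : Fin N) (m : ℕ) (hm : m < N) :
    Xi K a (X ^ m : K[X]) = if (a : ℕ) = m then (X : K[X]) ^ (m + 1) else 0 := by
  set j : Fin N := ⟨m, hm⟩ with hj
  have h1 : Xi K a (X ^ m : K[X])
      = ((Lb K a).eval ((m : ℕ) : K)) • (Mx K (X ^ m : K[X])) := by
    rw [Xi, Module.End.mul_apply, aeval_eig K _ ((m : ℕ) : K) _ (Op_pow K m), map_smul]
  have hMx : Mx K (X ^ m : K[X]) = (X : K[X]) ^ (m + 1) := by
    rw [Mx, LinearMap.mulLeft_apply, ← pow_succ']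
  by_cases hcase : (a : ℕ) = m
  · have haj : a = j := Fin.ext hcase
    have : (Lb K a).eval ((m : ℕ) : K) = 1 := by
      have := Lagrange.eval_basis_self (v := fun i : Fin N => ((i : ℕ) : K))
        (nodes_inj K) (Finset.mem_univ a)
      simpa [Lb, haj] using this
    rw [h1, this, one_smul, hMx, if_pos hcase]
  · have haj : a ≠ j := fun h => hcase (by rw [h])
    have : (Lb K a).eval ((m : ℕ) : K) = 0 := by
      have := Lagrange.eval_basis_of_ne (v := fun i : Fin N => ((i : ℕ) : K))
        haj (Finset.mem_univ j)
      simpa [Lb] using this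
    rw [h1, this, zero_smul, if_neg hcase]

/-- The descending list `[m-1, ..., 1, 0]`. -/
def desc : ℕ → List ℕ
  | 0 => []
  | (m + 1) => m :: desc m

lemma desc_eq (m : ℕ) : desc m = List.ofFn (fun i : Fin m => m - 1 - (i : ℕ)) := by
  induction m with
  | zero => rfl
  | succ m ih =>
      rw [desc, ih, List.ofFn_succ]
      congr 1
      all_goals try simp
      all_goals funext i
      all_goals simp only [Nat.sub_sub, Nat.add_comm]

lemma prod_apply (l : List (Fin N)) (hl : l.length ≤ N) :
    (l.map (Xi K)).prod ((X : K[X]) ^ 0)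
      = if l.map Fin.val = desc l.length then (X : K[X]) ^ l.length else 0 := by
  induction l with
  | nil => simp [desc]
  | cons a t ih =>
      have ht : t.length ≤ N := by simp at hl; omega
      have htN : t.length < N := by simp at hl; omega
      rw [List.map_cons, List.prod_cons, Module.End.mul_apply, ih ht]
      by_cases hcond : t.map Fin.val = desc t.length
      · rw [if_pos hcond, Xi_pow K a t.length htN]
        by_cases ha : (a : ℕ) = t.length
        · rw [if_pos ha, if_pos, List.length_cons]
          rw [List.map_cons, hcond, List.length_cons, desc, ha]
        · rw [if_neg ha, if_neg]
          intro h
          rw [List.map_cons, List.length_cons, desc] at h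
          exact ha (List.head_eq_of_cons_eq h)
      · rw [if_neg hcond, map_zero, if_neg]
        intro h
        rw [List.map_cons, List.length_cons, desc] at h
        exact hcond (List.tail_eq_of_cons_eq h)

lemma prod_rev :
    ((List.ofFn fun i => Xi K ((Fin.revPerm : Equiv.Perm (Fin N)) i)).prod) ((X : K[X]) ^ 0)
      = (X : K[X]) ^ N := by
  have h := prod_apply K (List.ofFn (fun i : Fin N => (Fin.revPerm : Equiv.Perm (Fin N)) i))
    (le_of_eq List.length_ofFn)
  have he : (List.ofFn fun i => Xi K ((Fin.revPerm : Equiv.Perm (Fin N)) i))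
      = List.map (Xi K) (List.ofFn fun i : Fin N => (Fin.revPerm : Equiv.Perm (Fin N)) i) := by
    rw [List.map_ofFn]; rfl
  rw [he, h, if_pos]
  · simp
  · rw [List.map_ofFn, List.length_ofFn, desc_eq]
    exact congrArg List.ofFn (funext fun i => by
      simp only [Function.comp_apply, Fin.revPerm_apply, Fin.val_rev]; omega)

lemma prod_other (σ : Equiv.Perm (Fin N)) (hσ : σ ≠ Fin.revPerm) :
    ((List.ofFn fun i => Xi K (σ i)).prod) ((X : K[X]) ^ 0) = 0 := by
  have h := prod_apply K (List.ofFn (fun i : Fin N => σ i)) (le_of_eq List.length_ofFn)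
  have he : (List.ofFn fun i => Xi K (σ i))
      = List.map (Xi K) (List.ofFn fun i : Fin N => σ i) := by
    rw [List.map_ofFn]; rfl
  rw [he, h, if_neg]
  intro hc
  apply hσ
  rw [List.map_ofFn, List.length_ofFn, desc_eq] at hc
  have hfn := List.ofFn_inj.mp hc
  ext i
  have := congrFun hfn i
  simp only [Function.comp_apply] at this
  rw [this]
  simp only [Fin.revPerm_apply, Fin.val_rev]
  omega

end WeylAux

/-- Over a field of characteristic `0`, the Weyl algebra `A_1` satisfies no nontrivial
multilinear polynomial identity: for every `N ≥ 1` there are `X_1, …, X_N ∈ A_1` with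
`s_N(X_1, …, X_N) ≠ 0`. -/
theorem stmt_9 (K : Type) [Field K] [CharZero K] (N : ℕ) (hN : 1 ≤ N) :
    ∃ X : Fin N → Module.End K (Polynomial K),
      (∀ i, X i ∈ WeylAlg K) ∧ sPoly X ≠ 0 := by
  refine ⟨fun i => WeylAux.Xi K i, fun i => WeylAux.Xi_mem K i, ?_⟩
  intro h0
  have h1 : (sPoly (fun i : Fin N => WeylAux.Xi K i)) ((Polynomial.X : Polynomial K) ^ 0)
      = (Equiv.Perm.sign (Fin.revPerm : Equiv.Perm (Fin N)) : ℤ) •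
          (Polynomial.X : Polynomial K) ^ N := by
    rw [sPoly, LinearMap.sum_apply]
    rw [Finset.sum_eq_single_of_mem (Fin.revPerm : Equiv.Perm (Fin N)) (Finset.mem_univ _)]
    · rw [LinearMap.smul_apply, WeylAux.prod_rev]
    · intro σ _ hσ
      rw [LinearMap.smul_apply, WeylAux.prod_other K σ hσ, smul_zero]
  rw [h0] at h1
  simp only [LinearMap.zero_apply] at h1
  have hXN : (Polynomial.X : Polynomial K) ^ N ≠ 0 := pow_ne_zero _ Polynomial.X_ne_zero
  rcases Int.units_eq_one_or (Equiv.Perm.sign (Fin.revPerm : Equiv.Perm (Fin N))) with h | h <;>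
    rw [h] at h1
  · simp at h1; exact hXN h1.symm
  · rw [Units.val_neg, Units.val_one, neg_smul, one_smul] at h1
    exact hXN (neg_eq_zero.mp h1.symm)
end

section
/- For G_k defined recursively by G_0 = {()} and G_k = ⋃_{i=1}^{k} {(i, 0, ..., 0 [i−1 zeros]) followed by an element of G_{k−i}}, one has ∑_{α ∈ G_k} sign(α + (0,1,...,k−1)) · k!/(α_1!···α_k!) = 1 for all k ≥ 1, where sign(β) for a tuple β of distinct non-negative integers is the sign of the permutation sorting β into increasing order (and sign is 0, with the term omitted, if entries coincide). -/
/-- The recursively defined family `G_k` of compositions of `k` of length `k`: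
`G_0 = {()}` and an element of `G_k` is `(i, 0, …, 0)` (with `i−1` zeros) followed by an
element of `G_{k−i}`, for some `1 ≤ i ≤ k`. -/
inductive Gmem : ℕ → List ℕ → Prop
  | nil : Gmem 0 []
  | cons (i k : ℕ) (t : List ℕ) (h1 : 1 ≤ i) (h2 : i ≤ k) (ht : Gmem (k - i) t) :
      Gmem k (i :: List.replicate (i - 1) 0 ++ t)

/-- The `sign` of a tuple of natural numbers: the sign of the permutation sorting it into
increasing order if its entries are distinct, and `0` otherwise. -/
noncomputable def signTuple {k : ℕ} (β : Fin k → ℕ) : ℤ :=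
  if Function.Injective β then (Equiv.Perm.sign (Tuple.sort β) : ℤ) else 0

lemma Gmem.length' {k : ℕ} {l : List ℕ} (h : Gmem k l) : l.length = k := by
  induction h with
  | nil => rfl
  | cons i k t h1 h2 ht ih => simp [ih]; omega

lemma Gmem.le {k : ℕ} {l : List ℕ} (h : Gmem k l) : ∀ x ∈ l, x ≤ k := by
  induction h with
  | nil => simp
  | cons i k t h1 h2 ht ih =>
    intro x hx
    simp [List.mem_append, List.eq_of_mem_replicate] at hx
    rcases hx with rfl | hx | hx
    · exact h2
    · omega
    · have := ih x hx; omega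

lemma signTuple_perm {k : ℕ} (π : Equiv.Perm (Fin k)) :
    signTuple (fun j : Fin k => (π j : ℕ) + 1) = (Equiv.Perm.sign π : ℤ) := by
  have hinj : Function.Injective (fun j : Fin k => (π j : ℕ) + 1) := by
    intro a b hab
    simp only [add_left_inj] at hab
    exact π.injective (Fin.val_injective hab)
  rw [signTuple, if_pos hinj]
  have h1 : Monotone ((fun j : Fin k => (π j : ℕ) + 1) ∘ ⇑π⁻¹) := by
    intro a b hab
    simp only [Function.comp_apply, Equiv.Perm.inv_def, Equiv.apply_symm_apply]
    exact Nat.succ_le_succ hab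
  have h2 := Tuple.monotone_sort (fun j : Fin k => (π j : ℕ) + 1)
  have h3 := Tuple.unique_monotone h1 h2
  have hsort : Tuple.sort (fun j : Fin k => (π j : ℕ) + 1) = π⁻¹ := by
    ext j
    exact congrArg Fin.val (hinj (congrFun h3 j)).symm
  rw [hsort, Equiv.Perm.sign_inv]

lemma build_perm {k i : ℕ} (h1 : 1 ≤ i) (h2 : i ≤ k) (π' : Equiv.Perm (Fin (k - i))) :
    ∃ π : Equiv.Perm (Fin k),
      ((Equiv.Perm.sign π : ℤ) = (-1) ^ (i - 1) * (Equiv.Perm.sign π' : ℤ)) ∧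
      (∀ j : Fin k, (j : ℕ) = 0 → (π j : ℕ) = i - 1) ∧
      (∀ j : Fin k, 1 ≤ (j : ℕ) → (j : ℕ) < i → (π j : ℕ) = (j : ℕ) - 1) ∧
      (∀ (j : Fin k) (m : Fin (k - i)), (j : ℕ) = i + (m : ℕ) →
        (π j : ℕ) = i + (π' m : ℕ)) := by
  obtain ⟨i', rfl⟩ : ∃ i', i = i' + 1 := ⟨i - 1, by omega⟩
  let e : Fin (i' + 1) ⊕ Fin (k - (i' + 1)) ≃ Fin k :=
    finSumFinEquiv.trans (finCongr (by omega))
  let π : Equiv.Perm (Fin k) := e.permCongr (Equiv.sumCongr (finRotate (i' + 1))⁻¹ π')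
  have he1 : ∀ x : Fin (i' + 1), (e (Sum.inl x) : ℕ) = (x : ℕ) := by
    intro x; simp [e]
  have he2 : ∀ x : Fin (k - (i' + 1)), (e (Sum.inr x) : ℕ) = (i' + 1) + (x : ℕ) := by
    intro x; simp [e]
  have happ : ∀ s : Fin (i' + 1) ⊕ Fin (k - (i' + 1)),
      π (e s) = e (Equiv.sumCongr (finRotate (i' + 1))⁻¹ π' s) := by
    intro s; simp [π, Equiv.permCongr_apply]
  refine ⟨π, ?_, ?_, ?_, ?_⟩
  · simp only [π, Equiv.Perm.sign_permCongr, Equiv.Perm.sign_sumCongr, map_inv,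
      sign_finRotate]
    push_cast
    simp
  · intro j hj
    have hj' : j = e (Sum.inl 0) := by
      apply Fin.ext; rw [he1]; simp [hj]
    have hrot : (finRotate (i' + 1))⁻¹ (0 : Fin (i' + 1)) = Fin.last i' := by
      rw [← finRotate_last, Equiv.Perm.inv_def, Equiv.symm_apply_apply]
    rw [hj', happ]
    simp only [Equiv.sumCongr_apply, Sum.map_inl, hrot, he1]
    simp [Fin.last]
  · intro j hj1 hj2
    have hj' : j = e (Sum.inl ⟨(j : ℕ), hj2⟩) := by
      apply Fin.ext; rw [he1]
    have key : finRotate (i' + 1) ⟨(j : ℕ) - 1, by omega⟩ = ⟨(j : ℕ), hj2⟩ := by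
      rw [finRotate_succ_apply]
      apply Fin.ext
      rw [Fin.val_add_one_of_lt]
      · simp; omega
      · rw [Fin.lt_iff_val_lt_val]; simp [Fin.last]; omega
    have hrot : (finRotate (i' + 1))⁻¹ ⟨(j : ℕ), hj2⟩ = ⟨(j : ℕ) - 1, by omega⟩ := by
      rw [Equiv.Perm.inv_def, Equiv.symm_apply_eq]
      exact key.symm
    conv_lhs => rw [hj', happ]
    simp only [Equiv.sumCongr_apply, Sum.map_inl, hrot, he1]
  · intro j m hjm
    have hj' : j = e (Sum.inr m) := by
      apply Fin.ext; rw [he2]; exact hjm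
    conv_lhs => rw [hj', happ]
    simp only [Equiv.sumCongr_apply, Sum.map_inr, he2]

lemma Gmem.decomp {k : ℕ} (hk : k ≠ 0) (f : Fin k → ℕ) (h : Gmem k (List.ofFn f)) :
    ∃ (i : ℕ) (h1 : 1 ≤ i) (h2 : i ≤ k),
      (∀ j : Fin k, (j : ℕ) = 0 → f j = i) ∧
      (∀ j : Fin k, 1 ≤ (j : ℕ) → (j : ℕ) < i → f j = 0) ∧
      Gmem (k - i) (List.ofFn fun m : Fin (k - i) => f ⟨i + (m : ℕ), by omega⟩) := by
  obtain ⟨i, t, h1, h2, ht, heq⟩ :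
      ∃ i t, 1 ≤ i ∧ i ≤ k ∧ Gmem (k - i) t ∧
        List.ofFn f = i :: List.replicate (i - 1) 0 ++ t := by
    generalize hL : List.ofFn f = L at h
    cases h with
    | nil => exact absurd rfl hk
    | cons i k t h1 h2 ht => exact ⟨i, t, h1, h2, ht, rfl⟩
  have htl : t.length = k - i := ht.length'
  have hget : ∀ (n : ℕ) (hn : n < k),
      f ⟨n, hn⟩ = (i :: List.replicate (i - 1) 0 ++ t)[n]'(by
        simp [htl]; omega) := by
    intro n hn
    have h' := List.getElem_of_eq heq (show n < (List.ofFn f).length by simp [hn])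
    simpa using h'
  refine ⟨i, h1, h2, ?_, ?_, ?_⟩
  · intro j hj
    have := hget (j : ℕ) j.isLt
    rw [Fin.eta] at this
    rw [this]
    simp [hj]
  · intro j hj1 hj2
    have := hget (j : ℕ) j.isLt
    rw [Fin.eta] at this
    rw [this]
    obtain ⟨m, hm⟩ : ∃ m, (j : ℕ) = m + 1 := ⟨(j : ℕ) - 1, by omega⟩
    simp only [hm, List.getElem_cons_succ]
    rw [List.getElem_append_left (by simp; omega)]
    simp
  · have heq2 : (List.ofFn fun m : Fin (k - i) => f ⟨i + (m : ℕ), by omega⟩) = t := by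
      apply List.ext_getElem
      · simp [htl]
      · intro n hn1 hn2
        simp only [List.getElem_ofFn]
        have hik : i + n < k := by simp at hn1; omega
        rw [hget (i + n) hik]
        obtain ⟨m, hm⟩ : ∃ m, i + n = m + 1 := ⟨i + n - 1, by omega⟩
        simp only [hm, List.getElem_cons_succ]
        rw [List.getElem_append_right (by simp; omega)]
        congr 1
        simp; omega
    rw [heq2]
    exact ht

lemma gmem_perm : ∀ (k : ℕ) (f : Fin k → ℕ), Gmem k (List.ofFn f) →
    ∃ π : Equiv.Perm (Fin k), ∀ j : Fin k, f j + (j : ℕ) = (π j : ℕ) + 1 := by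
  intro k
  induction k using Nat.strong_induction_on with
  | _ k IH =>
  intro f h
  rcases Nat.eq_zero_or_pos k with rfl | hk
  · exact ⟨1, fun j => j.elim0⟩
  obtain ⟨i, h1, h2, hf0, hfz, htail⟩ := Gmem.decomp (by omega) f h
  obtain ⟨π', hπ'⟩ := IH (k - i) (by omega) _ htail
  obtain ⟨π, hsign, hp0, hpz, hpt⟩ := build_perm h1 h2 π'
  refine ⟨π, fun j => ?_⟩
  rcases Nat.lt_or_ge (j : ℕ) i with hj | hj
  · rcases Nat.eq_zero_or_pos (j : ℕ) with hj0 | hj1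
    · rw [hf0 j hj0, hp0 j hj0, hj0]; omega
    · rw [hfz j hj1 hj, hpz j hj1 hj]; omega
  · set m : Fin (k - i) := ⟨(j : ℕ) - i, by omega⟩ with hm
    have hπm := hπ' m
    have hfe : f ⟨i + (m : ℕ), by omega⟩ = f j := by
      congr 1
      apply Fin.ext
      simp [hm]
      omega
    rw [hfe] at hπm
    rw [hpt j m (by simp [hm]; omega)]
    have : (m : ℕ) = (j : ℕ) - i := by simp [hm]
    omega

/-- Embedding of a `G_{k-i}` tuple into a `G_k` tuple with head `i`. -/
def emb (k i : ℕ) (g : Fin (k - i) → Fin (k - i + 1)) : Fin k → Fin (k + 1) :=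
  fun j => if h0 : (j : ℕ) = 0 then ⟨min i k, by omega⟩
    else if hji : (j : ℕ) < i then ⟨0, by omega⟩
    else Fin.castLE (by omega) (g ⟨(j : ℕ) - i, by have := j.isLt; omega⟩)

lemma emb_zero {k i : ℕ} (h2 : i ≤ k) (g : Fin (k - i) → Fin (k - i + 1))
    (j : Fin k) (hj : (j : ℕ) = 0) : (emb k i g j : ℕ) = i := by
  simp [emb, hj, Nat.min_eq_left h2]

lemma emb_mid {k i : ℕ} (g : Fin (k - i) → Fin (k - i + 1))
    (j : Fin k) (hj1 : 1 ≤ (j : ℕ)) (hj2 : (j : ℕ) < i) : (emb k i g j : ℕ) = 0 := by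
  simp only [emb]
  rw [dif_neg (by omega), dif_pos hj2]

lemma emb_tail {k i : ℕ} (h1 : 1 ≤ i) (g : Fin (k - i) → Fin (k - i + 1))
    (j : Fin k) (m : Fin (k - i)) (hjm : (j : ℕ) = i + (m : ℕ)) :
    (emb k i g j : ℕ) = (g m : ℕ) := by
  have hj0 : ¬ ((j : ℕ) = 0) := by omega
  have hji : ¬ ((j : ℕ) < i) := by omega
  simp only [emb, dif_neg hj0, dif_neg hji, Fin.coe_castLE]
  congr 2
  simp only [Fin.ext_iff, Fin.val_mk]
  omega

lemma gmem_emb {k i : ℕ} (h1 : 1 ≤ i) (h2 : i ≤ k)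
    (g : Fin (k - i) → Fin (k - i + 1))
    (hg : Gmem (k - i) (List.ofFn fun m => ((g m : ℕ)))) :
    Gmem k (List.ofFn fun j => ((emb k i g j : ℕ))) := by
  have heq : (List.ofFn fun j => ((emb k i g j : ℕ))) =
      i :: List.replicate (i - 1) 0 ++ List.ofFn (fun m => ((g m : ℕ))) := by
    apply List.ext_getElem
    · simp; omega
    · intro n hn1 hn2
      simp only [List.length_ofFn] at hn1
      simp only [List.getElem_ofFn]
      by_cases hn0 : n = 0
      · subst hn0
        rw [emb_zero h2]
        · simp
        · rfl
      · obtain ⟨m, rfl⟩ : ∃ m, n = m + 1 := ⟨n - 1, by omega⟩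
        rcases Nat.lt_or_ge (m + 1) i with hni | hni
        · rw [List.getElem_append_left (by simp; omega)]
          simp only [List.getElem_cons_succ, List.getElem_replicate]
          rw [emb_mid g _ (by simp) (by simpa using hni)]
        · rw [List.getElem_append_right (by simp; omega)]
          simp only [List.getElem_ofFn]
          rw [emb_tail h1 g _ ⟨m + 1 - i, by omega⟩ (by simp; omega)]
          congr 2
          simp only [Fin.ext_iff, Fin.val_mk]
          simp
          omega
  rw [heq]
  exact Gmem.cons i k _ h1 h2 hg

lemma prod_emb {k i : ℕ} (h1 : 1 ≤ i) (h2 : i ≤ k) (g : Fin (k - i) → Fin (k - i + 1)) :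
    (∏ j : Fin k, (((emb k i g j : ℕ)).factorial : ℚ)) =
      (i.factorial : ℚ) * ∏ m : Fin (k - i), (((g m : ℕ)).factorial : ℚ) := by
  have hik : i + (k - i) = k := by omega
  rw [← Fin.prod_congr' (fun j : Fin k => (((emb k i g j : ℕ)).factorial : ℚ)) hik,
    Fin.prod_univ_add]
  congr 1
  · -- first block
    obtain ⟨i', rfl⟩ : ∃ i', i = i' + 1 := ⟨i - 1, by omega⟩
    rw [Fin.prod_univ_succ]
    have h0 : ((emb k (i' + 1) g (Fin.cast hik (Fin.castAdd (k - (i' + 1)) 0)) : ℕ)) = i' + 1 := by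
      rw [emb_zero h2]
      simp
    rw [h0]
    have hrest : ∀ x : Fin i',
        (((emb k (i' + 1) g (Fin.cast hik (Fin.castAdd (k - (i' + 1)) x.succ)) : ℕ)).factorial : ℚ) = 1 := by
      intro x
      rw [emb_mid g _ (by simp) (by simp)]
      simp [Nat.factorial]
    rw [Finset.prod_congr rfl (fun x _ => hrest x), Finset.prod_const_one, mul_one]
  · -- second block
    apply Finset.prod_congr rfl
    intro m _
    congr 1
    rw [emb_tail h1 g _ m (by simp)]

lemma sign_emb {k i : ℕ} (h1 : 1 ≤ i) (h2 : i ≤ k)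
    (g : Fin (k - i) → Fin (k - i + 1))
    (hg : Gmem (k - i) (List.ofFn fun m => ((g m : ℕ)))) :
    signTuple (fun j : Fin k => (emb k i g j : ℕ) + (j : ℕ)) =
      (-1) ^ (i - 1) * signTuple (fun m : Fin (k - i) => (g m : ℕ) + (m : ℕ)) := by
  obtain ⟨π', hπ'⟩ := gmem_perm (k - i) _ hg
  obtain ⟨π, hsign, hp0, hpz, hpt⟩ := build_perm h1 h2 π'
  have hL : (fun j : Fin k => (emb k i g j : ℕ) + (j : ℕ)) =
      fun j => (π j : ℕ) + 1 := by
    funext j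
    rcases Nat.lt_or_ge (j : ℕ) i with hj | hj
    · rcases Nat.eq_zero_or_pos (j : ℕ) with hj0 | hj1
      · rw [emb_zero h2 g j hj0, hp0 j hj0, hj0]; omega
      · rw [emb_mid g j hj1 hj, hpz j hj1 hj]; omega
    · set m : Fin (k - i) := ⟨(j : ℕ) - i, by have := j.isLt; omega⟩ with hm
      have hjm : (j : ℕ) = i + (m : ℕ) := by simp [hm]; omega
      rw [emb_tail h1 g j m hjm, hpt j m hjm]
      have := hπ' m
      omega
  have hR : (fun m : Fin (k - i) => (g m : ℕ) + (m : ℕ)) =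
      fun m => (π' m : ℕ) + 1 := by
    funext m
    have := hπ' m
    omega
  rw [hL, hR, signTuple_perm, signTuple_perm, hsign]

open scoped Classical in
lemma stmt_aux : ∀ k : ℕ,
    ∑ f ∈ Finset.univ.filter
        (fun f : Fin k → Fin (k + 1) => Gmem k (List.ofFn fun i => ((f i : ℕ)))),
      ((signTuple (fun i : Fin k => (f i : ℕ) + (i : ℕ)) : ℚ) *
        ((k.factorial : ℚ) / ∏ i, ((f i : ℕ).factorial : ℚ))) = 1 := by
  intro k
  induction k using Nat.strong_induction_on with
  | _ k IH =>
  rcases Nat.eq_zero_or_pos k with rfl | hk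
  · -- base case k = 0
    have huniv : (Finset.univ.filter
        (fun f : Fin 0 → Fin 1 => Gmem 0 (List.ofFn fun i => ((f i : ℕ))))) =
        Finset.univ := by
      apply Finset.filter_true_of_mem
      intro f _
      simpa using Gmem.nil
    rw [huniv]
    rw [Finset.sum_eq_single_of_mem (fun _ => 0) (Finset.mem_univ _)]
    · have hinj : Function.Injective (fun i : Fin 0 => (((fun _ => 0 : Fin 0 → Fin 1) i : ℕ) + (i : ℕ))) :=
        fun a => a.elim0
      rw [signTuple, if_pos hinj]
      have : Tuple.sort (fun i : Fin 0 => (((fun _ => 0 : Fin 0 → Fin 1) i : ℕ) + (i : ℕ))) = 1 :=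
        Subsingleton.elim _ _
      rw [this]
      simp
    · intro b _ hb
      exact absurd (Subsingleton.elim b _) hb
  · -- inductive step
    have key : ∑ p ∈ (Finset.Icc 1 k).sigma (fun i => Finset.univ.filter
          (fun g : Fin (k - i) → Fin (k - i + 1) =>
            Gmem (k - i) (List.ofFn fun m => ((g m : ℕ))))),
        ((signTuple (fun j : Fin k => (emb k p.1 p.2 j : ℕ) + (j : ℕ)) : ℚ) *
          ((k.factorial : ℚ) / ∏ j, ((emb k p.1 p.2 j : ℕ).factorial : ℚ)))
        = ∑ f ∈ Finset.univ.filter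
          (fun f : Fin k → Fin (k + 1) => Gmem k (List.ofFn fun i => ((f i : ℕ)))),
        ((signTuple (fun i : Fin k => (f i : ℕ) + (i : ℕ)) : ℚ) *
          ((k.factorial : ℚ) / ∏ i, ((f i : ℕ).factorial : ℚ))) := by
      apply Finset.sum_bij (i := fun p _ => emb k p.1 p.2)
      · -- maps into
        rintro ⟨i, g⟩ hp
        rw [Finset.mem_sigma, Finset.mem_Icc, Finset.mem_filter] at hp
        obtain ⟨⟨hi1, hi2⟩, _, hg⟩ := hp
        rw [Finset.mem_filter]
        exact ⟨Finset.mem_univ _, gmem_emb hi1 hi2 g hg⟩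
      · -- injective
        rintro ⟨i, g⟩ hp ⟨i', g'⟩ hp' hee
        rw [Finset.mem_sigma, Finset.mem_Icc] at hp hp'
        obtain ⟨⟨hi1, hi2⟩, _⟩ := hp
        obtain ⟨⟨hi1', hi2'⟩, _⟩ := hp'
        have hii : i = i' := by
          have h0 := congrFun hee ⟨0, hk⟩
          have h0' := congrArg Fin.val h0
          rw [emb_zero hi2 g _ rfl, emb_zero hi2' g' _ rfl] at h0'
          exact h0'
        subst hii
        have hgg : g = g' := by
          funext m
          have hj := congrFun hee ⟨i + (m : ℕ), by have := m.isLt; omega⟩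
          have hj' := congrArg Fin.val hj
          rw [emb_tail hi1 g _ m (by simp), emb_tail hi1 g' _ m (by simp)] at hj'
          exact Fin.val_injective hj'
        subst hgg
        rfl
      · -- surjective
        intro f hf
        rw [Finset.mem_filter] at hf
        obtain ⟨i, hi1, hi2, hf0, hfz, htail⟩ :=
          Gmem.decomp (by omega) (fun j => ((f j : ℕ))) hf.2
        have hbound : ∀ m : Fin (k - i), ((f ⟨i + (m : ℕ), by have := m.isLt; omega⟩ : ℕ)) ≤ k - i := by
          intro m
          apply htail.le
          rw [List.mem_ofFn]
          exact ⟨m, rfl⟩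
        refine ⟨⟨i, fun m => ⟨(f ⟨i + (m : ℕ), by have := m.isLt; omega⟩ : ℕ), by
          have := hbound m; omega⟩⟩, ?_, ?_⟩
        · rw [Finset.mem_sigma, Finset.mem_Icc, Finset.mem_filter]
          exact ⟨⟨hi1, hi2⟩, Finset.mem_univ _, htail⟩
        · funext j
          apply Fin.val_injective
          rcases Nat.lt_or_ge (j : ℕ) i with hj | hj
          · rcases Nat.eq_zero_or_pos (j : ℕ) with hj0 | hj1
            · rw [emb_zero hi2 _ j hj0]
              exact (hf0 j hj0).symm
            · rw [emb_mid _ j hj1 hj]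
              exact (hfz j hj1 hj).symm
          · set m : Fin (k - i) := ⟨(j : ℕ) - i, by have := j.isLt; omega⟩ with hm
            rw [emb_tail hi1 _ j m (by simp [hm]; omega)]
            show ((f ⟨i + (m : ℕ), _⟩ : ℕ)) = (f j : ℕ)
            congr 2
            simp only [Fin.ext_iff, Fin.val_mk, hm]
            omega
      · rintro ⟨i, g⟩ _
        rfl
    rw [← key, Finset.sum_sigma]
    have inner : ∀ i ∈ Finset.Icc 1 k,
        (∑ g ∈ Finset.univ.filter
          (fun g : Fin (k - i) → Fin (k - i + 1) =>
            Gmem (k - i) (List.ofFn fun m => ((g m : ℕ)))),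
        ((signTuple (fun j : Fin k => (emb k i g j : ℕ) + (j : ℕ)) : ℚ) *
          ((k.factorial : ℚ) / ∏ j, ((emb k i g j : ℕ).factorial : ℚ))))
        = ((-1 : ℚ)) ^ (i - 1) * (k.choose i : ℚ) := by
      intro i hi
      rw [Finset.mem_Icc] at hi
      obtain ⟨hi1, hi2⟩ := hi
      have hterm : ∀ g ∈ Finset.univ.filter
          (fun g : Fin (k - i) → Fin (k - i + 1) =>
            Gmem (k - i) (List.ofFn fun m => ((g m : ℕ)))),
          ((signTuple (fun j : Fin k => (emb k i g j : ℕ) + (j : ℕ)) : ℚ) *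
            ((k.factorial : ℚ) / ∏ j, ((emb k i g j : ℕ).factorial : ℚ)))
          = (((-1 : ℚ)) ^ (i - 1) * (k.choose i : ℚ)) *
            ((signTuple (fun m : Fin (k - i) => (g m : ℕ) + (m : ℕ)) : ℚ) *
              (((k - i).factorial : ℚ) / ∏ m, ((g m : ℕ).factorial : ℚ))) := by
        intro g hg
        rw [Finset.mem_filter] at hg
        rw [sign_emb hi1 hi2 g hg.2, prod_emb hi1 hi2 g]
        have hfacne : (Nat.factorial i : ℚ) ≠ 0 := Nat.cast_ne_zero.2 (Nat.factorial_ne_zero i)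
        have hprodne : (∏ m, ((g m : ℕ).factorial : ℚ)) ≠ 0 := by
          apply Finset.prod_ne_zero_iff.2
          intro m _
          exact Nat.cast_ne_zero.2 (Nat.factorial_ne_zero _)
        have hfact : (k.factorial : ℚ) =
            (k.choose i : ℚ) * (i.factorial : ℚ) * ((k - i).factorial : ℚ) := by
          exact_mod_cast congrArg (Nat.cast : ℕ → ℚ)
            (Nat.choose_mul_factorial_mul_factorial hi2).symm
        rw [hfact]
        push_cast
        field_simp
      rw [Finset.sum_congr rfl hterm, ← Finset.mul_sum]
      rw [IH (k - i) (by omega)]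
      ring
    rw [Finset.sum_congr rfl inner]
    -- final: ∑_{i=1}^{k} (-1)^(i-1) * C(k,i) = 1
    have halt : ∑ i ∈ Finset.range (k + 1), ((-1 : ℚ)) ^ i * (k.choose i : ℚ) = 0 := by
      have h := Int.alternating_sum_range_choose_of_ne (n := k) (by omega)
      have h2 := congrArg (fun z : ℤ => (z : ℚ)) h
      push_cast at h2
      simpa using h2
    have hsplit : Finset.range (k + 1) = insert 0 (Finset.Icc 1 k) := by
      ext x
      simp [Finset.mem_range, Finset.mem_Icc]
      omega
    rw [hsplit, Finset.sum_insert (by simp)] at halt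
    simp only [pow_zero, Nat.choose_zero_right, Nat.cast_one, one_mul] at halt
    have hneg : ∑ i ∈ Finset.Icc 1 k, ((-1 : ℚ)) ^ (i - 1) * (k.choose i : ℚ)
        = -∑ i ∈ Finset.Icc 1 k, ((-1 : ℚ)) ^ i * (k.choose i : ℚ) := by
      rw [← Finset.sum_neg_distrib]
      apply Finset.sum_congr rfl
      intro i hi
      rw [Finset.mem_Icc] at hi
      obtain ⟨m, rfl⟩ : ∃ m, i = m + 1 := ⟨i - 1, by omega⟩
      simp [pow_succ]
    rw [hneg]
    have : ∑ i ∈ Finset.Icc 1 k, ((-1 : ℚ)) ^ i * (k.choose i : ℚ) = -1 := by linarith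
    rw [this]
    norm_num

open scoped Classical in
/-- For every `k ≥ 1`,
`∑_{α ∈ G_k} sign(α + (0,1,…,k−1)) · k!/(α_1!⋯α_k!) = 1`. -/
theorem stmt_14 (k : ℕ) (hk : 1 ≤ k) :
    ∑ f ∈ Finset.univ.filter
        (fun f : Fin k → Fin (k + 1) => Gmem k (List.ofFn fun i => ((f i : ℕ)))),
      ((signTuple (fun i : Fin k => (f i : ℕ) + (i : ℕ)) : ℚ) *
        ((k.factorial : ℚ) / ∏ i, ((f i : ℕ).factorial : ℚ))) = 1 :=
  stmt_aux k
end

section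
/- Let k, p be positive integers with k ≤ 2p. In the super-Lagrangian algebra L, the k-th power (a∂^p)^k is a linear combination with non-negative integer coefficients of operators a^α∂^i where α is a strictly increasing k-tuple of non-negative integers, |α| + i = pk, and i ≥ p. -/
/-- The odd generator `∂^i(a)` of the Grassmann (exterior) super-algebra `𝒰`, realized in
the exterior algebra on the free module `ℕ →₀ K`. -/
noncomputable def gen (K : Type) [Field K] (i : ℕ) : ExteriorAlgebra K (ℕ →₀ K) :=
  ExteriorAlgebra.ι K (Finsupp.single i 1)

/-- The monomial `a^α = ∂^{α_1}(a) ⋯ ∂^{α_k}(a)`. -/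
noncomputable def grassMonom (K : Type) [Field K] {k : ℕ} (α : Fin k → ℕ) :
    ExteriorAlgebra K (ℕ →₀ K) :=
  (List.ofFn fun i => gen K (α i)).prod

/-- Monomial indexed by a list. -/
noncomputable def glist (K : Type) [Field K] (M : List ℕ) : ExteriorAlgebra K (ℕ →₀ K) :=
  (M.map (gen K)).prod

theorem glist_nil (K : Type) [Field K] : glist K [] = 1 := rfl

theorem glist_cons (K : Type) [Field K] (a : ℕ) (M : List ℕ) :
    glist K (a :: M) = gen K a * glist K M := by simp [glist]

theorem gen_sq (K : Type) [Field K] (a : ℕ) : gen K a * gen K a = 0 :=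
  ExteriorAlgebra.ι_sq_zero _

theorem glist_dup (K : Type) [Field K] (a : ℕ) (M : List ℕ) :
    glist K (a :: a :: M) = 0 := by
  rw [glist_cons, glist_cons, ← mul_assoc, gen_sq, zero_mul]

theorem closure_map_mem {M N : Type*} [AddMonoid M] [AddMonoid N] (f : M →+ N)
    {S : Set M} {T : Set N} (h : ∀ s ∈ S, f s ∈ AddSubmonoid.closure T)
    {x} (hx : x ∈ AddSubmonoid.closure S) : f x ∈ AddSubmonoid.closure T := by
  induction hx using AddSubmonoid.closure_induction with
  | mem s hs => exact h s hs
  | zero => simpa using (AddSubmonoid.closure T).zero_mem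
  | add a b _ _ ha hb => simpa [map_add] using (AddSubmonoid.closure T).add_mem ha hb

/-- The derivation `D` sends a sorted monomial to a non-negative combination of sorted
monomials with total degree raised by one, each entry dominating some entry of `L`. -/
theorem Dg (K : Type) [Field K] (D : Module.End K (ExteriorAlgebra K (ℕ →₀ K)))
    (hD : ∀ x y, D (x * y) = D x * y + x * D y)
    (hgen : ∀ i, D (gen K i) = gen K (i + 1)) :
    ∀ L : List ℕ, L.Pairwise (· < ·) →
      D (glist K L) ∈ AddSubmonoid.closure
        {x | ∃ M : List ℕ, M.Pairwise (· < ·) ∧ M.length = L.length ∧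
          (∀ b ∈ M, ∃ c ∈ L, c ≤ b) ∧ M.sum = L.sum + 1 ∧ x = glist K M} := by
  have hD1 : D 1 = 0 := by
    have h := hD 1 1
    simp only [one_mul, mul_one] at h
    exact (right_eq_add.mp h)
  intro L
  induction L with
  | nil =>
    intro _
    rw [glist_nil, hD1]
    exact zero_mem _
  | cons a L ih =>
    intro hs
    rw [List.pairwise_cons] at hs
    obtain ⟨ha, hLs⟩ := hs
    rw [glist_cons, hD (gen K a) (glist K L), hgen a]
    refine add_mem ?_ ?_
    · -- the term gen (a+1) * glist L
      rcases L with _ | ⟨b, L'⟩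
      · apply AddSubmonoid.subset_closure
        refine ⟨[a + 1], by simp, by simp, ?_, by simp, (glist_cons K (a + 1) []).symm⟩
        intro b hb
        simp at hb
        exact ⟨a, by simp, by omega⟩
      · by_cases hab : a + 1 = b
        · subst hab
          have : gen K (a + 1) * glist K ((a+1) :: L') = 0 := by
            rw [← glist_cons, glist_dup]
          rw [this]
          exact zero_mem _
        · apply AddSubmonoid.subset_closure
          have hblt : a < b := ha b (by simp)
          rw [List.pairwise_cons] at hLs
          refine ⟨(a + 1) :: b :: L', ?_, by simp, ?_, ?_, (glist_cons K (a + 1) (b :: L')).symm⟩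
          · rw [List.pairwise_cons]
            refine ⟨?_, by rw [List.pairwise_cons]; exact hLs⟩
            intro c hc
            rcases List.mem_cons.mp hc with h | h
            · omega
            · have := hLs.1 c h; omega
          · intro c hc
            rcases List.mem_cons.mp hc with h | h
            · exact ⟨a, by simp, by omega⟩
            · exact ⟨c, by simp [h], le_refl c⟩
          · simp; omega
    · -- the term gen a * D (glist L)
      refine closure_map_mem (AddMonoidHom.mulLeft (gen K a)) ?_ (ih hLs)
      rintro s ⟨M, hMs, hMlen, hMdom, hMsum, rfl⟩
      apply AddSubmonoid.subset_closure
      have haM : ∀ b ∈ M, a < b := by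
        intro b hb
        obtain ⟨c, hcL, hcb⟩ := hMdom b hb
        have := ha c hcL; omega
      refine ⟨a :: M, ?_, by simp [hMlen], ?_, by simp [hMsum]; omega, ?_⟩
      · rw [List.pairwise_cons]; exact ⟨haM, hMs⟩
      · intro b hb
        rcases List.mem_cons.mp hb with h | h
        · exact ⟨a, by simp [h], le_of_eq h.symm⟩
        · obtain ⟨c, hcL, hcb⟩ := hMdom b h
          exact ⟨c, by simp [hcL], hcb⟩
      · rw [glist_cons]; rfl

/-- Commuting `D^n` past a monomial-times-power operator. -/
theorem LC (K : Type) [Field K] (D : Module.End K (ExteriorAlgebra K (ℕ →₀ K)))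
    (hD : ∀ x y, D (x * y) = D x * y + x * D y)
    (hgen : ∀ i, D (gen K i) = gen K (i + 1)) :
    ∀ (n : ℕ) (L : List ℕ) (i : ℕ), L.Pairwise (· < ·) →
      D ^ n * (LinearMap.mulLeft K (glist K L) * D ^ i) ∈ AddSubmonoid.closure
        {T | ∃ (M : List ℕ) (j : ℕ), M.Pairwise (· < ·) ∧ M.length = L.length ∧
          M.sum + j = L.sum + i + n ∧ i ≤ j ∧
          T = LinearMap.mulLeft K (glist K M) * D ^ j} := by
  intro n
  induction n with
  | zero =>
    intro L i hL
    rw [pow_zero, one_mul]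
    exact AddSubmonoid.subset_closure ⟨L, i, hL, rfl, rfl, le_refl i, rfl⟩
  | succ n ih =>
    intro L i hL
    rw [pow_succ', mul_assoc]
    refine closure_map_mem (AddMonoidHom.mulLeft D) ?_ (ih L i hL)
    rintro s ⟨M, j, hMs, hMlen, hMsum, hij, rfl⟩
    have key : D * (LinearMap.mulLeft K (glist K M) * D ^ j)
        = LinearMap.mulLeft K (D (glist K M)) * D ^ j
          + LinearMap.mulLeft K (glist K M) * D ^ (j + 1) := by
      refine LinearMap.ext fun x => ?_
      simp only [Module.End.mul_apply, LinearMap.mulLeft_apply, LinearMap.add_apply,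
        pow_succ']
      rw [hD]
    show D * (LinearMap.mulLeft K (glist K M) * D ^ j) ∈ _
    rw [key]
    refine add_mem ?_ (AddSubmonoid.subset_closure ⟨M, j + 1, hMs, hMlen, by omega, by omega, rfl⟩)
    refine closure_map_mem (AddMonoidHom.mk' (fun y => LinearMap.mulLeft K y * D ^ j) (by
        intro a b
        refine LinearMap.ext fun x => ?_
        simp [Module.End.mul_apply, add_mul])) ?_ (Dg K D hD hgen M hMs)
    rintro s ⟨M', hM's, hM'len, _, hM'sum, rfl⟩
    exact AddSubmonoid.subset_closure
      ⟨M', j, hM's, by omega, by omega, hij, rfl⟩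

/-- Main lemma in list form. -/
theorem MainList (K : Type) [Field K] (D : Module.End K (ExteriorAlgebra K (ℕ →₀ K)))
    (hD : ∀ x y, D (x * y) = D x * y + x * D y)
    (hgen : ∀ i, D (gen K i) = gen K (i + 1))
    (p : ℕ) (hp : 1 ≤ p) :
    ∀ k, 1 ≤ k → (LinearMap.mulLeft K (gen K 0) * D ^ p) ^ k ∈ AddSubmonoid.closure
      {T | ∃ (M : List ℕ) (i : ℕ), M.Pairwise (· < ·) ∧ M.length = k ∧
        M.sum + i = p * k ∧ p ≤ i ∧ T = LinearMap.mulLeft K (glist K M) * D ^ i} := by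
  intro k hk1
  induction k, hk1 using Nat.le_induction with
  | base =>
    rw [pow_one]
    refine AddSubmonoid.subset_closure ⟨[0], p, by simp, by simp, by simp, le_refl p, ?_⟩
    have : glist K [0] = gen K 0 := by rw [glist_cons, glist_nil, mul_one]
    rw [this]
  | succ k hk1 ih =>
    rw [pow_succ']
    refine closure_map_mem (AddMonoidHom.mulLeft (LinearMap.mulLeft K (gen K 0) * D ^ p)) ?_ ih
    rintro s ⟨M, i, hMs, hMlen, hMsum, hpi, rfl⟩
    show (LinearMap.mulLeft K (gen K 0) * D ^ p) * _ ∈ _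
    rw [mul_assoc]
    refine closure_map_mem (AddMonoidHom.mulLeft (LinearMap.mulLeft K (gen K 0)))
      ?_ (LC K D hD hgen p M i hMs)
    rintro s ⟨M', j, hM's, hM'len, hM'sum, hij, rfl⟩
    show LinearMap.mulLeft K (gen K 0) * (LinearMap.mulLeft K (glist K M') * D ^ j) ∈ _
    have hml : LinearMap.mulLeft K (gen K 0) * LinearMap.mulLeft K (glist K M')
        = LinearMap.mulLeft K (glist K (0 :: M')) := by
      refine LinearMap.ext fun x => ?_
      simp [Module.End.mul_apply, glist_cons, mul_assoc]
    rw [← mul_assoc, hml]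
    rcases M' with _ | ⟨b, M''⟩
    · exfalso; simp at hM'len; omega
    · by_cases hb : b = 0
      · subst hb
        rw [glist_dup]
        have : LinearMap.mulLeft K (0 : ExteriorAlgebra K (ℕ →₀ K)) = 0 := by
          refine LinearMap.ext fun x => ?_; simp
        rw [this, zero_mul]
        exact zero_mem _
      · apply AddSubmonoid.subset_closure
        rw [List.pairwise_cons] at hM's
        refine ⟨0 :: b :: M'', j, ?_, by simp_all, ?_, by omega, rfl⟩
        · rw [List.pairwise_cons]
          refine ⟨?_, by rw [List.pairwise_cons]; exact hM's⟩
          intro c hc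
          rcases List.mem_cons.mp hc with h | h
          · omega
          · have := hM's.1 c h; omega
        · have hmul : p * (k + 1) = p * k + p := by ring
          simp at hM'sum hMlen ⊢
          omega

/-- For `1 ≤ k ≤ 2p`, the `k`-th power `(a∂^p)^k` in the super-Lagrangian algebra is a
non-negative-integer combination of operators `a^α ∂^i` with `α` a strictly increasing
`k`-tuple, `|α| + i = pk` and `i ≥ p`. Here `a∂^p` is the operator
`x ↦ a · ∂^p(x)` and `∂` is the even derivation with `∂(∂^j(a)) = ∂^{j+1}(a)`. -/
theorem stmt_16 (K : Type) [Field K] [CharZero K]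
    (D : Module.End K (ExteriorAlgebra K (ℕ →₀ K)))
    (hD : ∀ x y, D (x * y) = D x * y + x * D y)
    (hgen : ∀ i, D (gen K i) = gen K (i + 1))
    (p k : ℕ) (hp : 1 ≤ p) (hk1 : 1 ≤ k) (hk : k ≤ 2 * p) :
    ((LinearMap.mulLeft K (gen K 0) :
        Module.End K (ExteriorAlgebra K (ℕ →₀ K))) * D ^ p) ^ k ∈
      AddSubmonoid.closure
        {T | ∃ (α : Fin k → ℕ) (i : ℕ), StrictMono α ∧ (∑ j, α j) + i = p * k ∧ p ≤ i ∧
          T = (LinearMap.mulLeft K (grassMonom K α) :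
                Module.End K (ExteriorAlgebra K (ℕ →₀ K))) * D ^ i} := by
  have main := MainList K D hD hgen p hp k hk1
  refine AddSubmonoid.closure_le.mpr ?_ main
  rintro T ⟨M, i, hMs, hMlen, hMsum, hpi, rfl⟩
  subst hMlen
  apply AddSubmonoid.subset_closure
  refine ⟨M.get, i, hMs.sortedLT.strictMono_get, ?_, hpi, ?_⟩
  · have : ∑ j, M.get j = M.sum := by
      conv_rhs => rw [← List.ofFn_get M]
      rw [List.sum_ofFn]
    rw [this]; exact hMsum
  · have : grassMonom K M.get = glist K M := by
      unfold grassMonom glist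
      conv_rhs => rw [← List.ofFn_get M]
      rw [List.map_ofFn]
      rfl
    rw [this]
end

section
/- For p ≥ 1, (a∂^p)^{2p} = λ_p · a^{(0,1,2,...,2p−1)} ∂^p in the super-Lagrangian algebra, for some non-negative integer λ_p; and (a∂^p)^N = 0 for all N > 2p. -/
section Aux
variable (K : Type) [Field K]

lemma grassMonom_eq {k : ℕ} (α : Fin k → ℕ) :
    grassMonom K α = ExteriorAlgebra.ιMulti K k fun i => Finsupp.single (α i) 1 := by
  rw [ExteriorAlgebra.ιMulti_apply]; rfl

lemma grassMonom_eq_zero {k : ℕ} (α : Fin k → ℕ) (h : ¬ Function.Injective α) :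
    grassMonom K α = 0 := by
  rw [grassMonom_eq]
  simp only [Function.Injective, not_forall] at h
  obtain ⟨i, j, hij, hne⟩ := h
  exact AlternatingMap.map_eq_zero_of_eq _ _ (by rw [hij]) hne

lemma grassMonom_perm {k : ℕ} (β : Fin k → ℕ) (σ : Equiv.Perm (Fin k)) :
    grassMonom K (β ∘ σ) = Equiv.Perm.sign σ • grassMonom K β := by
  rw [grassMonom_eq, grassMonom_eq]
  exact AlternatingMap.map_perm _ (fun i => Finsupp.single (β i) 1) σ

lemma strictMono_le_apply {k : ℕ} {g : Fin k → ℕ} (hg : StrictMono g) (i : Fin k) :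
    (i : ℕ) ≤ g i := by
  have H : ∀ (m : ℕ) (i : Fin k), (i : ℕ) = m → m ≤ g i := by
    intro m
    induction m with
    | zero => intro i _; exact Nat.zero_le _
    | succ m ih =>
        intro i hi
        have hjk : m < k := by omega
        have hj : (⟨m, hjk⟩ : Fin k) < i := by simp [Fin.lt_def, hi]
        have h1 := ih ⟨m, hjk⟩ rfl
        have h2 := hg hj
        omega
  exact H _ i rfl

lemma sum_lb {k : ℕ} {α : Fin k → ℕ} (hinj : Function.Injective α) :
    ∑ i : Fin k, (i : ℕ) ≤ ∑ i, α i := by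
  classical
  have hmono : Monotone (α ∘ Tuple.sort α) := Tuple.monotone_sort α
  have hinj' : Function.Injective (α ∘ Tuple.sort α) :=
    hinj.comp (Tuple.sort α).injective
  have hsm : StrictMono (α ∘ Tuple.sort α) := hmono.strictMono_of_injective hinj'
  calc ∑ i : Fin k, (i : ℕ) ≤ ∑ i : Fin k, (α ∘ Tuple.sort α) i :=
        Finset.sum_le_sum fun i _ => strictMono_le_apply hsm i
    _ = ∑ i, α i := Equiv.sum_comp (Tuple.sort α) α

lemma perm_of_sum_le {k : ℕ} {α : Fin k → ℕ} (hinj : Function.Injective α)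
    (hsum : ∑ i, α i ≤ ∑ i : Fin k, (i : ℕ)) :
    ∃ σ : Equiv.Perm (Fin k), α = (fun i : Fin k => (i : ℕ)) ∘ σ := by
  classical
  have hmono : Monotone (α ∘ Tuple.sort α) := Tuple.monotone_sort α
  have hinj' : Function.Injective (α ∘ Tuple.sort α) :=
    hinj.comp (Tuple.sort α).injective
  have hsm : StrictMono (α ∘ Tuple.sort α) := hmono.strictMono_of_injective hinj'
  have hsum' : ∑ i : Fin k, (α ∘ Tuple.sort α) i = ∑ i, α i := Equiv.sum_comp (Tuple.sort α) α
  have hle : ∀ i ∈ (Finset.univ : Finset (Fin k)), (i : ℕ) ≤ (α ∘ Tuple.sort α) i :=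
    fun i _ => strictMono_le_apply hsm i
  have heq : ∀ i ∈ (Finset.univ : Finset (Fin k)), (i : ℕ) = (α ∘ Tuple.sort α) i := by
    rw [← Finset.sum_eq_sum_iff_of_le hle]
    have := Finset.sum_le_sum hle
    omega
  refine ⟨(Tuple.sort α)⁻¹, funext fun i => ?_⟩
  have := (heq ((Tuple.sort α)⁻¹ i) (Finset.mem_univ _)).symm
  simpa using this

end Aux

section Op
variable {K : Type} [Field K]

lemma grassMonom_zero' : grassMonom K (fun i : Fin 0 => (0:ℕ)) = 1 := by
  simp [grassMonom]

lemma grassMonom_singleton (s : Fin 1 → ℕ) : grassMonom K s = gen K (s 0) := by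
  simp [grassMonom, List.ofFn_succ]

lemma grassMonom_cons {k : ℕ} (i : ℕ) (α : Fin k → ℕ) :
    grassMonom K (Fin.cons i α) = gen K i * grassMonom K α := by
  simp [grassMonom, List.ofFn_succ]

lemma grassMonom_snoc {k : ℕ} (α : Fin k → ℕ) (i : ℕ) :
    grassMonom K (Fin.snoc α i) = grassMonom K α * gen K i := by
  rw [grassMonom, List.ofFn_succ']
  simp [grassMonom, List.concat_eq_append]

variable (D : Module.End K (ExteriorAlgebra K (ℕ →₀ K)))

lemma Dpow_gen (hgen : ∀ i, D (gen K i) = gen K (i + 1)) (k i : ℕ) :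
    (D ^ k) (gen K i) = gen K (i + k) := by
  induction k generalizing i with
  | zero => simp
  | succ k ih =>
      rw [pow_succ, Module.End.mul_apply, hgen, ih, show i + 1 + k = i + (k+1) from by omega]

lemma D_one' (hD : ∀ x y, D (x * y) = D x * y + x * D y) : D 1 = 0 := by
  have := hD 1 1
  simp only [mul_one, one_mul] at this
  exact add_eq_left.mp this.symm

lemma D_mul_mulLeft (hD : ∀ x y, D (x * y) = D x * y + x * D y)
    (x : ExteriorAlgebra K (ℕ →₀ K)) :
    D * LinearMap.mulLeft K x =
      LinearMap.mulLeft K (D x) + LinearMap.mulLeft K x * D := by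
  apply LinearMap.ext
  intro y
  simp [Module.End.mul_apply, LinearMap.mulLeft_apply, hD]

lemma Dpow_mulLeft_mem (hD : ∀ x y, D (x * y) = D x * y + x * D y)
    (x : ExteriorAlgebra K (ℕ →₀ K)) (k : ℕ) :
    (D ^ k) * LinearMap.mulLeft K x ∈
      Submodule.span K {X : Module.End K (ExteriorAlgebra K (ℕ →₀ K)) |
        ∃ i, i ≤ k ∧ X = LinearMap.mulLeft K ((D ^ i) x) * D ^ (k - i)} := by
  induction k with
  | zero =>
      apply Submodule.subset_span
      exact ⟨0, le_refl 0, by simp⟩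
  | succ k ih =>
      have h1 : (D ^ (k+1)) * LinearMap.mulLeft K x =
          (LinearMap.mulLeft K D) ((D ^ k) * LinearMap.mulLeft K x) := by
        rw [LinearMap.mulLeft_apply, pow_succ', mul_assoc]
      rw [h1]
      have h2 := Submodule.mem_map_of_mem (f := LinearMap.mulLeft K D) ih
      rw [Submodule.map_span] at h2
      refine Submodule.span_le.mpr ?_ h2
      rintro X ⟨Y, ⟨i, hik, rfl⟩, rfl⟩
      have hsplit : (LinearMap.mulLeft K D) (LinearMap.mulLeft K ((D ^ i) x) * D ^ (k - i)) =
          LinearMap.mulLeft K ((D ^ (i+1)) x) * D ^ (k - i)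
            + LinearMap.mulLeft K ((D ^ i) x) * D ^ (k - i + 1) := by
        rw [LinearMap.mulLeft_apply, ← mul_assoc, D_mul_mulLeft D hD, add_mul,
          mul_assoc, ← pow_succ', ← Module.End.mul_apply, ← pow_succ']
      rw [hsplit]
      refine add_mem
        (Submodule.subset_span ⟨i+1, by omega, by rw [show k+1-(i+1) = k-i from by omega]⟩)
        (Submodule.subset_span ⟨i, by omega, by rw [show k+1-i = k-i+1 from by omega]⟩)

lemma D_grassMonom (hD : ∀ x y, D (x * y) = D x * y + x * D y)
    (hgen : ∀ i, D (gen K i) = gen K (i + 1)) {k : ℕ} (s : Fin k → ℕ) :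
    D (grassMonom K s) = ∑ j : Fin k, grassMonom K (Function.update s j (s j + 1)) := by
  induction k with
  | zero =>
      have : grassMonom K s = 1 := by simp [grassMonom]
      rw [this, D_one' D hD]
      simp
  | succ k ih =>
      have hcons : s = Fin.cons (s 0) (Fin.tail s) := (Fin.cons_self_tail s).symm
      rw [hcons, grassMonom_cons, hD, hgen, ih (Fin.tail s)]
      rw [Fin.sum_univ_succ]
      congr 1
      · have hupd : Function.update (Fin.cons (s 0) (Fin.tail s)) 0
            ((Fin.cons (s 0) (Fin.tail s)) 0 + 1) = Fin.cons (s 0 + 1) (Fin.tail s) := by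
          funext i
          refine Fin.cases ?_ (fun j => ?_) i
          · simp
          · simp [Function.update_apply, Fin.succ_ne_zero, Fin.tail]
        rw [hupd, grassMonom_cons]
      · rw [Finset.mul_sum]
        apply Finset.sum_congr rfl
        intro j _
        have hupd : Function.update (Fin.cons (s 0) (Fin.tail s)) j.succ
            ((Fin.cons (s 0) (Fin.tail s)) j.succ + 1) =
            Fin.cons (s 0) (Function.update (Fin.tail s) j (Fin.tail s j + 1)) := by
          funext i
          refine Fin.cases ?_ (fun m => ?_) i
          · simp [Function.update_apply, (Fin.succ_ne_zero j).symm]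
          · simp [Function.update_apply, Fin.succ_inj, Fin.tail]
        rw [hupd, grassMonom_cons]

lemma main_span (hD : ∀ x y, D (x * y) = D x * y + x * D y)
    (hgen : ∀ i, D (gen K i) = gen K (i + 1)) (p : ℕ) :
    ∀ N : ℕ, 1 ≤ N →
    (LinearMap.mulLeft K (gen K 0) * D ^ p) ^ N ∈
      Submodule.span K {X : Module.End K (ExteriorAlgebra K (ℕ →₀ K)) |
        ∃ α : Fin N → ℕ, (∑ i, α i) + p ≤ N * p ∧
          X = LinearMap.mulLeft K (grassMonom K α) * D ^ (N * p - ∑ i, α i)} := by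
  intro N
  induction N with
  | zero => omega
  | succ N ih =>
      intro _
      by_cases hN : 1 ≤ N
      case neg =>
        -- N = 0, so N + 1 = 1
        have hN0 : N = 0 := by omega
        subst hN0
        apply Submodule.subset_span
        refine ⟨fun _ => 0, by simp, ?_⟩
        rw [pow_one]
        simp [grassMonom_singleton]
      case pos =>
        have hmem := ih hN
        set T := LinearMap.mulLeft K (gen K 0) * D ^ p with hT
        have h1 : T ^ (N + 1) = (LinearMap.mulRight K T) (T ^ N) := by
          rw [LinearMap.mulRight_apply, pow_succ]
        rw [h1]
        have h2 := Submodule.mem_map_of_mem (f := LinearMap.mulRight K T) hmem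
        rw [Submodule.map_span] at h2
        refine Submodule.span_le.mpr ?_ h2
        rintro X ⟨Y, ⟨α, hα, rfl⟩, rfl⟩
        rw [LinearMap.mulRight_apply]
        set m := N * p - ∑ i, α i with hm
        -- (L monα * D^m) * (L gen0 * D^p) = Ψ (D^m * L gen0)
        have h3 : LinearMap.mulLeft K (grassMonom K α) * D ^ m * T =
            (LinearMap.mulLeft K (LinearMap.mulLeft K (grassMonom K α)) ∘ₗ
              LinearMap.mulRight K (D ^ p)) (D ^ m * LinearMap.mulLeft K (gen K 0)) := by
          simp only [LinearMap.comp_apply, LinearMap.mulLeft_apply, LinearMap.mulRight_apply, hT]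
          rw [mul_assoc, mul_assoc]
        rw [h3]
        have h4 := Submodule.mem_map_of_mem
          (f := LinearMap.mulLeft K (LinearMap.mulLeft K (grassMonom K α)) ∘ₗ
              LinearMap.mulRight K (D ^ p)) (Dpow_mulLeft_mem D hD (gen K 0) m)
        rw [Submodule.map_span] at h4
        refine Submodule.span_le.mpr ?_ h4
        rintro Z ⟨W, ⟨i, hi, rfl⟩, rfl⟩
        apply Submodule.subset_span
        refine ⟨Fin.snoc α i, ?_, ?_⟩
        · rw [Fin.sum_univ_castSucc]
          simp only [Fin.snoc_castSucc, Fin.snoc_last]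
          have hNp : (N+1) * p = N*p + p := by ring
          omega
        · have hs : ∑ j : Fin (N+1), (Fin.snoc α i : Fin (N+1) → ℕ) j = (∑ j, α j) + i := by
            rw [Fin.sum_univ_castSucc]; simp
          simp only [LinearMap.comp_apply, LinearMap.mulLeft_apply, LinearMap.mulRight_apply]
          rw [hs, Dpow_gen D hgen, zero_add, grassMonom_snoc, LinearMap.mulLeft_mul,
            show (N+1) * p - ((∑ j, α j) + i) = (m - i) + p from by
              have hNp : (N+1) * p = N*p + p := by ring
              omega,
            pow_add]
          simp only [mul_assoc, Module.End.mul_eq_comp, LinearMap.comp_assoc]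

end Op

section Phi
variable (K : Type) [Field K]

lemma grassMonom_eq2 {k : ℕ} (α : Fin k → ℕ) :
    grassMonom K α = ExteriorAlgebra.ιMulti K k fun i => Finsupp.single (α i) 1 := by
  rw [ExteriorAlgebra.ιMulti_apply]; rfl

lemma strictMono_update {k : ℕ} {s : Fin k → ℕ} (hs : StrictMono s) (j : Fin k)
    (hinj : Function.Injective (Function.update s j (s j + 1))) :
    StrictMono (Function.update s j (s j + 1)) := by
  intro x y hxy
  rcases eq_or_ne x j with rfl | hx
  · rcases eq_or_ne y x with rfl | hy
    · exact absurd hxy (lt_irrefl _)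
    · rw [Function.update_self, Function.update_of_ne hy]
      have h1 : s x < s y := hs hxy
      rcases Nat.lt_or_ge (s x + 1) (s y) with h | h
      · exact h
      · exfalso
        have hxy' : Function.update s x (s x + 1) x = Function.update s x (s x + 1) y := by
          rw [Function.update_self, Function.update_of_ne hy]
          omega
        exact hy (hinj hxy').symm
  · rcases eq_or_ne y j with rfl | hy
    · rw [Function.update_of_ne hx, Function.update_self]
      have := hs hxy
      omega
    · rw [Function.update_of_ne hx, Function.update_of_ne hy]
      exact hs hxy

lemma strictMono_cons {k : ℕ} {s : Fin k → ℕ} (hs : StrictMono s) (h0 : ∀ j, 0 < s j) :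
    StrictMono (Fin.cons 0 s : Fin (k+1) → ℕ) := by
  intro x y hxy
  rcases Fin.eq_zero_or_eq_succ y with rfl | ⟨my, rfl⟩
  · exact absurd hxy (Fin.not_lt_zero x)
  · rcases Fin.eq_zero_or_eq_succ x with rfl | ⟨mx, rfl⟩
    · simpa using h0 my
    · simp only [Fin.cons_succ]
      exact hs (by rwa [Fin.succ_lt_succ_iff] at hxy)

noncomputable def phiMap (k : ℕ) (t : Fin k → ℕ) :
    ExteriorAlgebra K (ℕ →₀ K) →ₗ[K] K :=
  ExteriorAlgebra.liftAlternating fun n =>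
    if h : n = k then
      h.symm ▸ ((Matrix.detRowAlternating).compLinearMap
        (LinearMap.pi fun j : Fin k => Finsupp.lapply (t j)))
    else 0

lemma phiMap_ιMulti_ne {n k : ℕ} (t : Fin k → ℕ) (h : n ≠ k) (v : Fin n → (ℕ →₀ K)) :
    phiMap K k t (ExteriorAlgebra.ιMulti K n v) = 0 := by
  rw [phiMap, ExteriorAlgebra.liftAlternating_apply_ιMulti, dif_neg h]
  rfl

lemma phiMap_ιMulti_eq {k : ℕ} (t : Fin k → ℕ) (v : Fin k → (ℕ →₀ K)) :
    phiMap K k t (ExteriorAlgebra.ιMulti K k v) =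
      Matrix.det (Matrix.of fun i j => v i (t j)) := by
  rw [phiMap, ExteriorAlgebra.liftAlternating_apply_ιMulti, dif_pos rfl]
  rfl

lemma phiMap_self {k : ℕ} (t : Fin k → ℕ) (ht : StrictMono t) :
    phiMap K k t (grassMonom K t) = 1 := by
  rw [grassMonom_eq2, phiMap_ιMulti_eq]
  have : (Matrix.of fun i j => (Finsupp.single (t i) (1:K)) (t j)) = 1 := by
    ext i j
    rw [Matrix.one_apply]
    simp [Finsupp.single_apply, ht.injective.eq_iff]
  rw [this, Matrix.det_one]

lemma phiMap_grassMonom {n k : ℕ} (t : Fin k → ℕ) (ht : StrictMono t)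
    (s : Fin n → ℕ) (hs : StrictMono s) :
    ∃ m : ℕ, phiMap K k t (grassMonom K s) = (m : K) := by
  by_cases h : n = k
  · subst h
    by_cases hst : s = t
    · subst hst
      exact ⟨1, by rw [phiMap_self K s hs]; simp⟩
    · refine ⟨0, ?_⟩
      rw [grassMonom_eq2, phiMap_ιMulti_eq]
      -- the images of s and t differ
      have himg : Finset.image s Finset.univ ≠ Finset.image t Finset.univ := by
        intro hEq
        apply hst
        have hcs : (Finset.image s Finset.univ).card = n := by
          rw [Finset.card_image_of_injective _ hs.injective, Finset.card_univ, Fintype.card_fin]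
        have h1 : s = ⇑((Finset.image s Finset.univ).orderEmbOfFin hcs) :=
          Finset.orderEmbOfFin_unique hcs
            (fun x => Finset.mem_image_of_mem s (Finset.mem_univ x)) hs
        have h2 : t = ⇑((Finset.image s Finset.univ).orderEmbOfFin hcs) :=
          Finset.orderEmbOfFin_unique hcs
            (fun x => hEq ▸ Finset.mem_image_of_mem t (Finset.mem_univ x)) ht
        rw [h1, h2]
      have hnot : ¬ Finset.image s Finset.univ ⊆ Finset.image t Finset.univ := by
        intro hsub
        refine himg (Finset.eq_of_subset_of_card_le hsub ?_)
        rw [Finset.card_image_of_injective _ hs.injective,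
          Finset.card_image_of_injective _ ht.injective]
      obtain ⟨x, hxs, hxt⟩ := Finset.not_subset.mp hnot
      obtain ⟨i, _, rfl⟩ := Finset.mem_image.mp hxs
      rw [Nat.cast_zero]
      apply Matrix.det_eq_zero_of_row_eq_zero i
      intro j
      have hne : s i ≠ t j := fun hc => hxt (hc ▸ Finset.mem_image_of_mem t (Finset.mem_univ j))
      simp [Matrix.of_apply, Finsupp.single_apply, hne]
  · exact ⟨0, by rw [grassMonom_eq2, phiMap_ιMulti_ne K t h]; simp⟩

end Phi

section Cone
variable (K : Type) [Field K]

/-- The additive cone of standard (strictly increasing) Grassmann monomials. -/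
def coneSet : Set (ExteriorAlgebra K (ℕ →₀ K)) :=
  {x | ∃ (n : ℕ) (s : Fin n → ℕ), StrictMono s ∧ x = grassMonom K s}

lemma strictMono_fin_one (c : ℕ) : StrictMono (fun _ : Fin 1 => c) := by
  intro a b hab
  exact absurd (Subsingleton.elim a b ▸ hab) (lt_irrefl _)

lemma gen_mem_cone (c : ℕ) : gen K c ∈ AddSubmonoid.closure (coneSet K) :=
  AddSubmonoid.subset_closure
    ⟨1, fun _ => c, strictMono_fin_one c,
      (grassMonom_singleton (fun _ : Fin 1 => c)).symm⟩

lemma gen0_mul_mem_cone :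
    ∀ x ∈ AddSubmonoid.closure (coneSet K),
      gen K 0 * x ∈ AddSubmonoid.closure (coneSet K) := by
  have key : AddSubmonoid.closure (coneSet K) ≤
      AddSubmonoid.comap (LinearMap.mulLeft K (gen K 0)).toAddMonoidHom
        (AddSubmonoid.closure (coneSet K)) := by
    rw [AddSubmonoid.closure_le]
    rintro x ⟨n, s, hs, rfl⟩
    rw [SetLike.mem_coe, AddSubmonoid.mem_comap]
    show gen K 0 * grassMonom K s ∈ AddSubmonoid.closure (coneSet K)
    cases n with
    | zero =>
        have h1 : grassMonom K s = 1 := by simp [grassMonom]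
        rw [h1, mul_one]
        exact gen_mem_cone K 0
    | succ k =>
        rw [← grassMonom_cons]
        by_cases h0 : s 0 = 0
        · have hni : ¬ Function.Injective (Fin.cons 0 s : Fin (k+2) → ℕ) := by
            intro hinj
            have h1 : (Fin.cons 0 s : Fin (k+2) → ℕ) 0 = (Fin.cons 0 s : Fin (k+2) → ℕ) 1 := by
              rw [Fin.cons_zero, ← Fin.succ_zero_eq_one, Fin.cons_succ, h0]
            have h2 := hinj h1
            exact absurd h2 (by simp)
          rw [grassMonom_eq_zero K (Fin.cons 0 s) hni]
          exact zero_mem _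
        · refine AddSubmonoid.subset_closure ⟨k+2, Fin.cons 0 s, ?_, rfl⟩
          refine strictMono_cons hs ?_
          intro j
          have h2 := hs.monotone (Fin.zero_le j)
          omega
  intro x hx
  exact AddSubmonoid.mem_comap.mp (key hx)

variable {K} (D : Module.End K (ExteriorAlgebra K (ℕ →₀ K)))

lemma D_mem_cone (hD : ∀ x y, D (x * y) = D x * y + x * D y)
    (hgen : ∀ i, D (gen K i) = gen K (i + 1)) :
    ∀ x ∈ AddSubmonoid.closure (coneSet K), D x ∈ AddSubmonoid.closure (coneSet K) := by
  have key : AddSubmonoid.closure (coneSet K) ≤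
      AddSubmonoid.comap D.toAddMonoidHom (AddSubmonoid.closure (coneSet K)) := by
    rw [AddSubmonoid.closure_le]
    rintro x ⟨n, s, hs, rfl⟩
    rw [SetLike.mem_coe, AddSubmonoid.mem_comap]
    show D (grassMonom K s) ∈ AddSubmonoid.closure (coneSet K)
    rw [D_grassMonom D hD hgen s]
    refine AddSubmonoid.sum_mem _ ?_
    intro j _
    by_cases hinj : Function.Injective (Function.update s j (s j + 1))
    · exact AddSubmonoid.subset_closure ⟨n, _, strictMono_update hs j hinj, rfl⟩
    · rw [grassMonom_eq_zero K _ hinj]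
      exact zero_mem _
  intro x hx
  exact AddSubmonoid.mem_comap.mp (key hx)

lemma Dpow_mem_cone (hD : ∀ x y, D (x * y) = D x * y + x * D y)
    (hgen : ∀ i, D (gen K i) = gen K (i + 1)) (k : ℕ) :
    ∀ x ∈ AddSubmonoid.closure (coneSet K), (D ^ k) x ∈ AddSubmonoid.closure (coneSet K) := by
  induction k with
  | zero => intro x hx; simpa using hx
  | succ k ih =>
      intro x hx
      rw [pow_succ', Module.End.mul_apply]
      exact D_mem_cone D hD hgen _ (ih x hx)

lemma Tpow_mem_cone (hD : ∀ x y, D (x * y) = D x * y + x * D y)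
    (hgen : ∀ i, D (gen K i) = gen K (i + 1)) (p N : ℕ) :
    ∀ x ∈ AddSubmonoid.closure (coneSet K),
      ((LinearMap.mulLeft K (gen K 0) * D ^ p) ^ N) x ∈ AddSubmonoid.closure (coneSet K) := by
  induction N with
  | zero => intro x hx; simpa using hx
  | succ N ih =>
      intro x hx
      rw [pow_succ', Module.End.mul_apply]
      rw [Module.End.mul_apply, LinearMap.mulLeft_apply]
      exact gen0_mul_mem_cone K _ (Dpow_mem_cone D hD hgen p _ (ih x hx))

end Cone

set_option maxHeartbeats 2000000 in
set_option synthInstance.maxHeartbeats 1000000 in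
/-- In the super-Lagrangian algebra, `(a∂^p)^{2p} = λ_p · a^{(0,1,…,2p−1)} ∂^p` for some
non-negative integer `λ_p`, and `(a∂^p)^N = 0` for every `N > 2p`. -/
theorem stmt_17 (K : Type) [Field K] [CharZero K]
    (D : Module.End K (ExteriorAlgebra K (ℕ →₀ K)))
    (hD : ∀ x y, D (x * y) = D x * y + x * D y)
    (hgen : ∀ i, D (gen K i) = gen K (i + 1))
    (p : ℕ) (hp : 1 ≤ p) :
    (∃ lam : ℕ,
      ((LinearMap.mulLeft K (gen K 0) :
          Module.End K (ExteriorAlgebra K (ℕ →₀ K))) * D ^ p) ^ (2 * p) =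
        lam • ((LinearMap.mulLeft K (grassMonom K (fun j : Fin (2 * p) => (j : ℕ))) :
          Module.End K (ExteriorAlgebra K (ℕ →₀ K))) * D ^ p)) ∧
    ∀ N : ℕ, 2 * p < N →
      ((LinearMap.mulLeft K (gen K 0) :
          Module.End K (ExteriorAlgebra K (ℕ →₀ K))) * D ^ p) ^ N = 0 := by
  classical
  set T : Module.End K (ExteriorAlgebra K (ℕ →₀ K)) :=
    (LinearMap.mulLeft K (gen K 0) : Module.End K (ExteriorAlgebra K (ℕ →₀ K))) * D ^ p with hT
  set M : ExteriorAlgebra K (ℕ →₀ K) := grassMonom K (fun j : Fin (2 * p) => (j : ℕ)) with hM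
  set S : Module.End K (ExteriorAlgebra K (ℕ →₀ K)) :=
    (LinearMap.mulLeft K M : Module.End K (ExteriorAlgebra K (ℕ →₀ K))) * D ^ p with hS
  -- arithmetic facts about the triangular sum
  have hval2 : (∑ i : Fin (2*p), (i:ℕ)) * 2 = (2*p) * (2*p - 1) := by
    rw [Fin.sum_univ_eq_sum_range fun i => i]
    exact Finset.sum_range_id_mul_two _
  have hval : (∑ i : Fin (2*p), (i:ℕ)) = p * (2*p - 1) := by
    have h1 : (2*p) * (2*p-1) = (p * (2*p-1)) * 2 := by
      have h3 : 2*p - 1 + 1 = 2*p := by omega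
      calc (2*p) * (2*p-1) = (2*p-1) * (2*p) := by ring
        _ = (p * (2*p-1)) * 2 := by ring
    omega
  have hvalp : (∑ i : Fin (2*p), (i:ℕ)) + p = 2*p*p := by
    have h3 : 2*p - 1 + 1 = 2*p := by omega
    have h2 : p * (2*p-1) + p = 2*p*p := by
      calc p * (2*p-1) + p = p * ((2*p-1)+1) := by ring
        _ = p * (2*p) := by rw [h3]
        _ = 2*p*p := by ring
    omega
  -- Part 1: T ^ (2p) lies in the line spanned by S
  have hspan := main_span D hD hgen p (2*p) (by omega)
  have hmem2 : T ^ (2*p) ∈ Submodule.span K {S} := by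
    refine Submodule.span_le.mpr ?_ hspan
    rintro X ⟨α, hα, rfl⟩
    rw [SetLike.mem_coe]
    by_cases hinj : Function.Injective α
    · have hub : (∑ i, α i) ≤ ∑ i : Fin (2*p), (i:ℕ) := by omega
      obtain ⟨σ, hσ⟩ := perm_of_sum_le hinj hub
      have hsum_eq : (∑ i, α i) = ∑ i : Fin (2*p), (i:ℕ) := le_antisymm hub (sum_lb hinj)
      have hexp : 2*p*p - (∑ i, α i) = p := by omega
      have hmon : grassMonom K α = Equiv.Perm.sign σ • M := by
        rw [hσ, hM]
        exact grassMonom_perm K _ σ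
      rw [hexp, hmon]
      rcases Int.units_eq_one_or (Equiv.Perm.sign σ) with h1 | h1 <;> rw [h1]
      · rw [one_smul, ← hS]
        exact Submodule.subset_span rfl
      · have hneg : ((-1 : ℤˣ) • M) = -M := by
          rw [Units.smul_def]
          simp
        rw [hneg]
        have hLneg : (LinearMap.mulLeft K (-M) : Module.End K (ExteriorAlgebra K (ℕ →₀ K)))
            = -LinearMap.mulLeft K M := by
          apply LinearMap.ext
          intro y
          simp [LinearMap.mulLeft_apply, neg_mul]
        rw [hLneg, show -LinearMap.mulLeft K M * D ^ p = -(LinearMap.mulLeft K M * D ^ p) from neg_mul (LinearMap.mulLeft K M : Module.End K (ExteriorAlgebra K (ℕ →₀ K))) (D ^ p), ← hS]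
        exact neg_mem (Submodule.subset_span rfl)
    · rw [grassMonom_eq_zero K α hinj, LinearMap.mulLeft_zero_eq_zero, zero_mul]
      exact zero_mem _
  obtain ⟨z, hz⟩ := Submodule.mem_span_singleton.mp hmem2
  -- identify z with a natural number using the coefficient functional
  have hDx : (D ^ p) (gen K p) = gen K (2*p) := by
    rw [Dpow_gen D hgen, show p + p = 2*p from by ring]
  set G : ExteriorAlgebra K (ℕ →₀ K) := grassMonom K (fun i : Fin (2*p+1) => (i:ℕ)) with hG
  have hMG : M * gen K (2*p) = G := by
    have hfun : (fun i : Fin (2*p+1) => (i:ℕ))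
        = Fin.snoc (fun i : Fin (2*p) => (i:ℕ)) (2*p) := by
      funext i
      refine Fin.lastCases ?_ (fun j => ?_) i
      · rw [Fin.snoc_last]
        simp
      · rw [Fin.snoc_castSucc]
        simp
    rw [hG, hfun, grassMonom_snoc, ← hM]
  have happ : (T ^ (2*p)) (gen K p) = z • G := by
    rw [← hz, LinearMap.smul_apply, hS, Module.End.mul_apply, LinearMap.mulLeft_apply,
      hDx, hMG]
  have hvalmono : StrictMono (fun i : Fin (2*p+1) => (i:ℕ)) := fun a b h => h
  set φ : ExteriorAlgebra K (ℕ →₀ K) →ₗ[K] K :=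
    phiMap K (2*p+1) (fun i : Fin (2*p+1) => (i:ℕ)) with hφ
  have hφG : φ G = 1 := phiMap_self K _ hvalmono
  have hPx : (T ^ (2*p)) (gen K p) ∈ AddSubmonoid.closure (coneSet K) :=
    Tpow_mem_cone D hD hgen p (2*p) _ (gen_mem_cone K p)
  have key : AddSubmonoid.closure (coneSet K) ≤
      AddSubmonoid.comap φ.toAddMonoidHom (AddMonoidHom.mrange (Nat.castAddMonoidHom K)) := by
    rw [AddSubmonoid.closure_le]
    rintro y ⟨n, s, hs, rfl⟩
    rw [SetLike.mem_coe, AddSubmonoid.mem_comap]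
    obtain ⟨m, hm⟩ := phiMap_grassMonom K _ hvalmono s hs
    exact ⟨m, by simpa using hm.symm⟩
  obtain ⟨lam, hlam⟩ := AddSubmonoid.mem_comap.mp (key hPx)
  have hlam' : (lam : K) = φ ((T ^ (2*p)) (gen K p)) := by simpa using hlam
  have hzlam : z = (lam : K) := by
    rw [hlam', happ, map_smul, hφG, smul_eq_mul, mul_one]
  -- conclude part 1
  constructor
  · refine ⟨lam, ?_⟩
    calc T ^ (2*p) = z • S := hz.symm
      _ = (lam : K) • S := by rw [hzlam]
      _ = lam • S := by rw [Nat.cast_smul_eq_nsmul]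
  -- Part 2: vanishing
  · have hval2' : (∑ i : Fin (2*p+1), (i:ℕ)) * 2 = (2*p+1) * (2*p) := by
      rw [Fin.sum_univ_eq_sum_range fun i => i]
      have := Finset.sum_range_id_mul_two (2*p+1)
      rwa [show 2*p+1-1 = 2*p from by omega] at this
    have hval' : (∑ i : Fin (2*p+1), (i:ℕ)) = (2*p+1) * p := by
      have h1 : (2*p+1) * (2*p) = ((2*p+1) * p) * 2 := by ring
      omega
    have h0 : T ^ (2*p+1) = 0 := by
      have hspan1 := main_span D hD hgen p (2*p+1) (by omega)
      have hbot : T ^ (2*p+1) ∈ (⊥ : Submodule K (Module.End K (ExteriorAlgebra K (ℕ →₀ K)))) := by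
        refine Submodule.span_le.mpr ?_ hspan1
        rintro X ⟨α, hα, rfl⟩
        rw [SetLike.mem_coe, Submodule.mem_bot]
        by_cases hinj : Function.Injective α
        · exfalso
          have hlb := sum_lb hinj
          omega
        · rw [grassMonom_eq_zero K α hinj, LinearMap.mulLeft_zero_eq_zero, zero_mul]
      exact Submodule.mem_bot _ |>.mp hbot
    intro N hN
    have hsplit : T ^ N = T ^ (N - (2*p+1)) * T ^ (2*p+1) := by
      rw [← pow_add]
      congr 1
      omega
    rw [hsplit, h0, mul_zero]
end
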